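/- Let v : ℝ³ → ℝ be a smooth positive function of (x, y, t) satisfying the linear equation 2v_t = 3v_xy − v_xxx. Then the functions u := v_x/(2v) and q := v_y/(2v) satisfy the nonlinear equation −2u_t = u_xxx + 6(u u_xx + u_x² + 2u² u_x) − 3u_xy − 6u u_y − 6q u_x together with the constraint q_x = u_y. -/

import Mathlib

noncomputable def pdx {V : Type*} [NormedAddCommGroup V] [NormedSpace ℝ V]
    (f : ℝ → ℝ → ℝ → V) : ℝ → ℝ → ℝ → V :=
  fun x y t => deriv (fun s => f s y t) x

noncomputable def pdy {V : Type*} [NormedAddCommGroup V] [NormedSpace ℝ V]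
    (f : ℝ → ℝ → ℝ → V) : ℝ → ℝ → ℝ → V :=
  fun x y t => deriv (fun s => f x s t) y

noncomputable def pdt {V : Type*} [NormedAddCommGroup V] [NormedSpace ℝ V]
    (f : ℝ → ℝ → ℝ → V) : ℝ → ℝ → ℝ → V :=
  fun x y t => deriv (fun s => f x y s) t

namespace ColeHopfAux

open scoped ContDiff

abbrev E3 := ℝ × ℝ × ℝ

noncomputable def D (e : E3) (f : E3 → ℝ) : E3 → ℝ := fun p => fderiv ℝ f p e

def ee1 : E3 := (1, 0, 0)
def ee2 : E3 := (0, 1, 0)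
def ee3 : E3 := (0, 0, 1)

lemma inftop1 : (1 : WithTop ℕ∞) ≤ ∞ := by
  exact_mod_cast ENat.natCast_le_of_coe_top_le_withTop (le_refl ∞) 1

lemma inftop2 : (2 : WithTop ℕ∞) ≤ ∞ := by
  exact_mod_cast ENat.natCast_le_of_coe_top_le_withTop (le_refl ∞) 2

lemma smooth_diff {F : Type*} [NormedAddCommGroup F] [NormedSpace ℝ F] {f : E3 → F}
    (hf : ContDiff ℝ (⊤:ℕ∞) f) : Differentiable ℝ f :=
  hf.differentiable (by simp)

lemma smooth_fderiv {F : Type*} [NormedAddCommGroup F] [NormedSpace ℝ F] {f : E3 → F}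
    (hf : ContDiff ℝ (⊤:ℕ∞) f) : ContDiff ℝ (⊤:ℕ∞) (fderiv ℝ f) :=
  hf.fderiv_right (le_of_eq ENat.coe_top_add_one)

lemma contDiff_D (e : E3) {f : E3 → ℝ} (hf : ContDiff ℝ (⊤:ℕ∞) f) :
    ContDiff ℝ (⊤:ℕ∞) (D e f) :=
  (smooth_fderiv hf).clm_apply contDiff_const

lemma D_comm {f : E3 → ℝ} (hf : ContDiff ℝ (⊤:ℕ∞) f) (e e' : E3) (p : E3) :
    D e (D e' f) p = D e' (D e f) p := by
  have hdf : Differentiable ℝ (fderiv ℝ f) := smooth_diff (smooth_fderiv hf)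
  have key : ∀ a b : E3, D a (D b f) p = fderiv ℝ (fderiv ℝ f) p a b := by
    intro a b
    have h2 : HasFDerivAt (fun q => (ContinuousLinearMap.apply ℝ ℝ b) (fderiv ℝ f q))
        ((ContinuousLinearMap.apply ℝ ℝ b).comp (fderiv ℝ (fderiv ℝ f) p)) p :=
      (ContinuousLinearMap.apply ℝ ℝ b).hasFDerivAt.comp p (hdf p).hasFDerivAt
    have hb : D b f = fun q => (ContinuousLinearMap.apply ℝ ℝ b) (fderiv ℝ f q) := rfl
    rw [D, hb, h2.fderiv]
    rfl
  rw [key, key]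
  exact (hf.contDiffAt.isSymmSndFDerivAt (by simpa [minSmoothness_of_isRCLikeNormedField] using inftop2)) e e'

lemma D_congr {f g : E3 → ℝ} (h : f = g) (e : E3) (p : E3) : D e f p = D e g p := by rw [h]

lemma D_cmul (c : ℝ) (f : E3 → ℝ) (hf : Differentiable ℝ f) (e p : E3) :
    D e (fun q => c * f q) p = c * D e f p := by
  have C : HasFDerivAt (fun q => c * f q) (c • fderiv ℝ f p) p :=
    ((hf p).hasFDerivAt).const_mul c
  show fderiv ℝ (fun q => c * f q) p e = _
  simp only [D]
  rw [C.fderiv]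
  simp [smul_eq_mul]

lemma D_sub3 (f g : E3 → ℝ) (hf : Differentiable ℝ f) (hg : Differentiable ℝ g) (e p : E3) :
    D e (fun q => 3 * f q - g q) p = 3 * D e f p - D e g p := by
  have C : HasFDerivAt (fun q => 3 * f q - g q)
      ((3:ℝ) • fderiv ℝ f p - fderiv ℝ g p) p :=
    (((hf p).hasFDerivAt).const_mul 3).sub (hg p).hasFDerivAt
  show fderiv ℝ (fun q => 3 * f q - g q) p e = _
  simp only [D]
  rw [C.fderiv]
  simp

lemma D_shape1 (f g : E3 → ℝ) (hf : Differentiable ℝ f) (hg : Differentiable ℝ g) (e p : E3) :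
    D e (fun q => f q * (2 * g q)) p = f p * (2 * D e g p) + 2 * g p * D e f p := by
  have C : HasFDerivAt (fun q => f q * (2 * g q))
      (f p • ((2:ℝ) • fderiv ℝ g p) + (2 * g p) • fderiv ℝ f p) p :=
    ((hf p).hasFDerivAt).mul (((hg p).hasFDerivAt).const_mul 2)
  show fderiv ℝ (fun q => f q * (2 * g q)) p e = _
  simp only [D]
  rw [C.fderiv]
  simp [smul_eq_mul]
  try ring

lemma D_shape2 (f g h k : E3 → ℝ) (hf : Differentiable ℝ f) (hg : Differentiable ℝ g)
    (hh : Differentiable ℝ h) (hk : Differentiable ℝ k) (e p : E3) :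
    D e (fun q => f q * (2 * g q) + 2 * h q * k q) p
      = f p * (2 * D e g p) + 2 * g p * D e f p + (2 * h p * D e k p + 2 * k p * D e h p) := by
  have C : HasFDerivAt (fun q => f q * (2 * g q) + 2 * h q * k q)
      ((f p • ((2:ℝ) • fderiv ℝ g p) + (2 * g p) • fderiv ℝ f p)
        + ((2 * h p) • fderiv ℝ k p + k p • ((2:ℝ) • fderiv ℝ h p))) p :=
    (((hf p).hasFDerivAt).mul (((hg p).hasFDerivAt).const_mul 2)).add
      ((((hh p).hasFDerivAt).const_mul 2).mul ((hk p).hasFDerivAt))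
  show fderiv ℝ (fun q => f q * (2 * g q) + 2 * h q * k q) p e = _
  simp only [D]
  rw [C.fderiv]
  simp [smul_eq_mul]
  try ring

lemma D_shape3 (f g h k l m n o : E3 → ℝ) (hf : Differentiable ℝ f) (hg : Differentiable ℝ g)
    (hh : Differentiable ℝ h) (hk : Differentiable ℝ k) (hl : Differentiable ℝ l)
    (hm : Differentiable ℝ m) (hn : Differentiable ℝ n) (ho : Differentiable ℝ o) (e p : E3) :
    D e (fun q => f q * (2 * g q) + 2 * h q * k q + (2 * l q * m q + 2 * n q * o q)) p
      = f p * (2 * D e g p) + 2 * g p * D e f p + (2 * h p * D e k p + 2 * k p * D e h p)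
        + ((2 * l p * D e m p + 2 * m p * D e l p) + (2 * n p * D e o p + 2 * o p * D e n p)) := by
  have C : HasFDerivAt
      (fun q => f q * (2 * g q) + 2 * h q * k q + (2 * l q * m q + 2 * n q * o q))
      (((f p • ((2:ℝ) • fderiv ℝ g p) + (2 * g p) • fderiv ℝ f p)
        + ((2 * h p) • fderiv ℝ k p + k p • ((2:ℝ) • fderiv ℝ h p)))
        + (((2 * l p) • fderiv ℝ m p + m p • ((2:ℝ) • fderiv ℝ l p))
          + ((2 * n p) • fderiv ℝ o p + o p • ((2:ℝ) • fderiv ℝ n p)))) p :=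
    ((((hf p).hasFDerivAt).mul (((hg p).hasFDerivAt).const_mul 2)).add
      ((((hh p).hasFDerivAt).const_mul 2).mul ((hk p).hasFDerivAt))).add
      (((((hl p).hasFDerivAt).const_mul 2).mul ((hm p).hasFDerivAt)).add
        ((((hn p).hasFDerivAt).const_mul 2).mul ((ho p).hasFDerivAt)))
  show fderiv ℝ _ p e = _
  simp only [D]
  rw [C.fderiv]
  simp [smul_eq_mul]
  try ring

noncomputable def UU (V : E3 → ℝ) : E3 → ℝ := fun p => D ee1 V p / (2 * V p)
noncomputable def QQ (V : E3 → ℝ) : E3 → ℝ := fun p => D ee2 V p / (2 * V p)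

theorem abstract_main (V : E3 → ℝ) (hV : ContDiff ℝ (⊤:ℕ∞) V) (hVpos : ∀ p, 0 < V p)
    (hlinV : ∀ p, 2 * D ee3 V p = 3 * D ee2 (D ee1 V) p - D ee1 (D ee1 (D ee1 V)) p) :
    (∀ p, -2 * D ee3 (UU V) p = D ee1 (D ee1 (D ee1 (UU V))) p
        + 6 * (UU V p * D ee1 (D ee1 (UU V)) p + D ee1 (UU V) p ^ 2
            + 2 * UU V p ^ 2 * D ee1 (UU V) p)
        - 3 * D ee2 (D ee1 (UU V)) p - 6 * UU V p * D ee2 (UU V) p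
        - 6 * QQ V p * D ee1 (UU V) p)
    ∧ (∀ p, D ee1 (QQ V) p = D ee2 (UU V) p) := by
  have hVne : ∀ p, V p ≠ 0 := fun p => (hVpos p).ne'
  have h2V : ∀ p, 2 * V p ≠ 0 := fun p => mul_ne_zero two_ne_zero (hVne p)
  have hVd : Differentiable ℝ V := smooth_diff hV
  have hV1 : ContDiff ℝ (⊤:ℕ∞) (D ee1 V) := contDiff_D ee1 hV
  have hV2 : ContDiff ℝ (⊤:ℕ∞) (D ee2 V) := contDiff_D ee2 hV
  have hV3 : ContDiff ℝ (⊤:ℕ∞) (D ee3 V) := contDiff_D ee3 hV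
  have hV11 : ContDiff ℝ (⊤:ℕ∞) (D ee1 (D ee1 V)) := contDiff_D ee1 hV1
  have hV12 : ContDiff ℝ (⊤:ℕ∞) (D ee2 (D ee1 V)) := contDiff_D ee2 hV1
  have hV111 : ContDiff ℝ (⊤:ℕ∞) (D ee1 (D ee1 (D ee1 V))) := contDiff_D ee1 hV11
  have hU : ContDiff ℝ (⊤:ℕ∞) (UU V) := hV1.div (contDiff_const.mul hV) h2V
  have hQ : ContDiff ℝ (⊤:ℕ∞) (QQ V) := hV2.div (contDiff_const.mul hV) h2V
  have hUd : Differentiable ℝ (UU V) := smooth_diff hU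
  have hQd : Differentiable ℝ (QQ V) := smooth_diff hQ
  have hUx : ContDiff ℝ (⊤:ℕ∞) (D ee1 (UU V)) := contDiff_D ee1 hU
  have hUxd : Differentiable ℝ (D ee1 (UU V)) := smooth_diff hUx
  have hUxxd : Differentiable ℝ (D ee1 (D ee1 (UU V))) := smooth_diff (contDiff_D ee1 hUx)
  have idUp : ∀ p, UU V p * (2 * V p) = D ee1 V p := fun p => by
    show D ee1 V p / (2 * V p) * (2 * V p) = D ee1 V p
    exact div_mul_cancel₀ _ (h2V p)
  have idQp : ∀ p, QQ V p * (2 * V p) = D ee2 V p := fun p => by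
    show D ee2 V p / (2 * V p) * (2 * V p) = D ee2 V p
    exact div_mul_cancel₀ _ (h2V p)
  have idU : (fun q => UU V q * (2 * V q)) = D ee1 V := funext idUp
  have idQ : (fun q => QQ V q * (2 * V q)) = D ee2 V := funext idQp
  have rel1 : ∀ e p, UU V p * (2 * D e V p) + 2 * V p * D e (UU V) p = D e (D ee1 V) p :=
    fun e p => (D_shape1 (UU V) V hUd hVd e p).symm.trans (D_congr idU e p)
  have relQ : ∀ p, QQ V p * (2 * D ee1 V p) + 2 * V p * D ee1 (QQ V) p = D ee1 (D ee2 V) p :=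
    fun p => (D_shape1 (QQ V) V hQd hVd ee1 p).symm.trans (D_congr idQ ee1 p)
  have id2 : (fun q => UU V q * (2 * D ee1 V q) + 2 * V q * D ee1 (UU V) q) = D ee1 (D ee1 V) :=
    funext (rel1 ee1)
  have rel2 : ∀ e p, UU V p * (2 * D e (D ee1 V) p) + 2 * D ee1 V p * D e (UU V) p
      + (2 * V p * D e (D ee1 (UU V)) p + 2 * D ee1 (UU V) p * D e V p)
      = D e (D ee1 (D ee1 V)) p :=
    fun e p => (D_shape2 (UU V) (D ee1 V) V (D ee1 (UU V))
      hUd (smooth_diff hV1) hVd hUxd e p).symm.trans (D_congr id2 e p)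
  have id3 : (fun q => UU V q * (2 * D ee1 (D ee1 V) q) + 2 * D ee1 V q * D ee1 (UU V) q
      + (2 * V q * D ee1 (D ee1 (UU V)) q + 2 * D ee1 (UU V) q * D ee1 V q))
      = D ee1 (D ee1 (D ee1 V)) := funext (rel2 ee1)
  have rel3 : ∀ p, UU V p * (2 * D ee1 (D ee1 (D ee1 V)) p)
      + 2 * D ee1 (D ee1 V) p * D ee1 (UU V) p
      + (2 * D ee1 V p * D ee1 (D ee1 (UU V)) p + 2 * D ee1 (UU V) p * D ee1 (D ee1 V) p)
      + ((2 * V p * D ee1 (D ee1 (D ee1 (UU V))) p + 2 * D ee1 (D ee1 (UU V)) p * D ee1 V p)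
        + (2 * D ee1 (UU V) p * D ee1 (D ee1 V) p + 2 * D ee1 V p * D ee1 (D ee1 (UU V)) p))
      = D ee1 (D ee1 (D ee1 (D ee1 V))) p :=
    fun p => (D_shape3 (UU V) (D ee1 (D ee1 V)) (D ee1 V) (D ee1 (UU V)) V
      (D ee1 (D ee1 (UU V))) (D ee1 (UU V)) (D ee1 V)
      hUd (smooth_diff hV11) (smooth_diff hV1) hUxd hVd hUxxd hUxd (smooth_diff hV1)
      ee1 p).symm.trans (D_congr id3 ee1 p)
  -- second form of the linear equation, differentiated in x
  have r2 : ∀ p, 2 * D ee3 (D ee1 V) p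
      = 3 * D ee2 (D ee1 (D ee1 V)) p - D ee1 (D ee1 (D ee1 (D ee1 V))) p := by
    intro p
    have idlin : (fun q => 2 * D ee3 V q)
        = (fun q => 3 * D ee2 (D ee1 V) q - D ee1 (D ee1 (D ee1 V)) q) := funext hlinV
    have h := D_congr idlin ee1 p
    rw [D_cmul 2 (D ee3 V) (smooth_diff hV3) ee1 p,
      D_sub3 (D ee2 (D ee1 V)) (D ee1 (D ee1 (D ee1 V)))
        (smooth_diff hV12) (smooth_diff hV111) ee1 p] at h
    rw [D_comm hV ee1 ee3 p, D_comm hV1 ee1 ee2 p] at h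
    exact h
  -- solved (division) forms
  have m_ux : ∀ p, D ee1 (UU V) p * (2 * V p ^ 2)
      = V p * D ee1 (D ee1 V) p - D ee1 V p ^ 2 := fun p => by
    linear_combination V p * rel1 ee1 p - D ee1 V p * idUp p
  have m_uy : ∀ p, D ee2 (UU V) p * (2 * V p ^ 2)
      = V p * D ee2 (D ee1 V) p - D ee1 V p * D ee2 V p := fun p => by
    linear_combination V p * rel1 ee2 p - D ee2 V p * idUp p
  have m_ut : ∀ p, D ee3 (UU V) p * (2 * V p ^ 2)
      = V p * D ee3 (D ee1 V) p - D ee1 V p * D ee3 V p := fun p => by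
    linear_combination V p * rel1 ee3 p - D ee3 V p * idUp p
  have m_uxx : ∀ p, D ee1 (D ee1 (UU V)) p * (2 * V p ^ 3)
      = V p ^ 2 * D ee1 (D ee1 (D ee1 V)) p - 3 * V p * D ee1 V p * D ee1 (D ee1 V) p
        + 2 * D ee1 V p ^ 3 := fun p => by
    linear_combination V p ^ 2 * rel2 ee1 p - V p * D ee1 (D ee1 V) p * idUp p
      - 2 * D ee1 V p * m_ux p
  have m_uxy : ∀ p, D ee2 (D ee1 (UU V)) p * (2 * V p ^ 3)
      = V p ^ 2 * D ee2 (D ee1 (D ee1 V)) p - V p * D ee2 V p * D ee1 (D ee1 V) p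
        - 2 * V p * D ee1 V p * D ee2 (D ee1 V) p + 2 * D ee1 V p ^ 2 * D ee2 V p := fun p => by
    linear_combination V p ^ 2 * rel2 ee2 p - V p * D ee2 (D ee1 V) p * idUp p
      - D ee1 V p * m_uy p - D ee2 V p * m_ux p
  have m_uxxx : ∀ p, D ee1 (D ee1 (D ee1 (UU V))) p * (2 * V p ^ 4)
      = V p ^ 3 * D ee1 (D ee1 (D ee1 (D ee1 V))) p
        - 4 * V p ^ 2 * D ee1 V p * D ee1 (D ee1 (D ee1 V)) p
        - 3 * V p ^ 2 * D ee1 (D ee1 V) p ^ 2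
        + 12 * V p * D ee1 V p ^ 2 * D ee1 (D ee1 V) p - 6 * D ee1 V p ^ 4 := fun p => by
    linear_combination V p ^ 3 * rel3 p - V p ^ 2 * D ee1 (D ee1 (D ee1 V)) p * idUp p
      - 3 * V p * D ee1 (D ee1 V) p * m_ux p - 3 * D ee1 V p * m_uxx p
  have m_qx : ∀ p, D ee1 (QQ V) p * (2 * V p ^ 2)
      = V p * D ee2 (D ee1 V) p - D ee2 V p * D ee1 V p := fun p => by
    linear_combination V p * relQ p - D ee1 V p * idQp p + V p * D_comm hV ee1 ee2 p
  have hden2 : ∀ p, (2 : ℝ) * V p ^ 2 ≠ 0 :=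
    fun p => mul_ne_zero two_ne_zero (pow_ne_zero _ (hVne p))
  have hden3 : ∀ p, (2 : ℝ) * V p ^ 3 ≠ 0 :=
    fun p => mul_ne_zero two_ne_zero (pow_ne_zero _ (hVne p))
  have hden4 : ∀ p, (2 : ℝ) * V p ^ 4 ≠ 0 :=
    fun p => mul_ne_zero two_ne_zero (pow_ne_zero _ (hVne p))
  have e_ux : ∀ p, D ee1 (UU V) p
      = (V p * D ee1 (D ee1 V) p - D ee1 V p ^ 2) / (2 * V p ^ 2) := fun p => by
    rw [eq_div_iff (hden2 p)]; linear_combination m_ux p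
  have e_uy : ∀ p, D ee2 (UU V) p
      = (V p * D ee2 (D ee1 V) p - D ee1 V p * D ee2 V p) / (2 * V p ^ 2) := fun p => by
    rw [eq_div_iff (hden2 p)]; linear_combination m_uy p
  have e_ut : ∀ p, D ee3 (UU V) p
      = (V p * D ee3 (D ee1 V) p - D ee1 V p * D ee3 V p) / (2 * V p ^ 2) := fun p => by
    rw [eq_div_iff (hden2 p)]; linear_combination m_ut p
  have e_uxx : ∀ p, D ee1 (D ee1 (UU V)) p
      = (V p ^ 2 * D ee1 (D ee1 (D ee1 V)) p - 3 * V p * D ee1 V p * D ee1 (D ee1 V) p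
        + 2 * D ee1 V p ^ 3) / (2 * V p ^ 3) := fun p => by
    rw [eq_div_iff (hden3 p)]; linear_combination m_uxx p
  have e_uxy : ∀ p, D ee2 (D ee1 (UU V)) p
      = (V p ^ 2 * D ee2 (D ee1 (D ee1 V)) p - V p * D ee2 V p * D ee1 (D ee1 V) p
        - 2 * V p * D ee1 V p * D ee2 (D ee1 V) p + 2 * D ee1 V p ^ 2 * D ee2 V p)
        / (2 * V p ^ 3) := fun p => by
    rw [eq_div_iff (hden3 p)]; linear_combination m_uxy p
  have e_uxxx : ∀ p, D ee1 (D ee1 (D ee1 (UU V))) p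
      = (V p ^ 3 * D ee1 (D ee1 (D ee1 (D ee1 V))) p
        - 4 * V p ^ 2 * D ee1 V p * D ee1 (D ee1 (D ee1 V)) p
        - 3 * V p ^ 2 * D ee1 (D ee1 V) p ^ 2
        + 12 * V p * D ee1 V p ^ 2 * D ee1 (D ee1 V) p - 6 * D ee1 V p ^ 4)
        / (2 * V p ^ 4) := fun p => by
    rw [eq_div_iff (hden4 p)]; linear_combination m_uxxx p
  have e_qx : ∀ p, D ee1 (QQ V) p
      = (V p * D ee2 (D ee1 V) p - D ee2 V p * D ee1 V p) / (2 * V p ^ 2) := fun p => by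
    rw [eq_div_iff (hden2 p)]; linear_combination m_qx p
  have hu0 : ∀ p, UU V p = D ee1 V p / (2 * V p) := fun p => rfl
  have hq0 : ∀ p, QQ V p = D ee2 V p / (2 * V p) := fun p => rfl
  constructor
  · intro p
    have hb3 : D ee3 V p
        = (3 * D ee2 (D ee1 V) p - D ee1 (D ee1 (D ee1 V)) p) / 2 := by
      linarith [hlinV p]
    have hb13 : D ee3 (D ee1 V) p
        = (3 * D ee2 (D ee1 (D ee1 V)) p - D ee1 (D ee1 (D ee1 (D ee1 V))) p) / 2 := by
      linarith [r2 p]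
    rw [e_ut p, e_uxxx p, e_uxx p, e_uxy p, e_ux p, e_uy p, hu0 p, hq0 p, hb3, hb13]
    have ha : V p ≠ 0 := hVne p
    field_simp
    ring
  · intro p
    rw [e_qx p, e_uy p]
    ring

lemma pdx_eq {g : ℝ → ℝ → ℝ → ℝ} {G : E3 → ℝ} (hg : ∀ x y t, g x y t = G (x, y, t))
    (hG : Differentiable ℝ G) (x y t : ℝ) : pdx g x y t = D ee1 G (x, y, t) := by
  have h1 : HasDerivAt (fun s : ℝ => ((s, y, t) : E3)) ee1 x :=
    (hasDerivAt_id x).prodMk ((hasDerivAt_const x y).prodMk (hasDerivAt_const x t))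
  have h2 := (hG (x, y, t)).hasFDerivAt.comp_hasDerivAt x h1
  have h3 : (fun s => g s y t) = fun s => G (s, y, t) := funext fun s => hg s y t
  show deriv (fun s => g s y t) x = _
  rw [h3]
  exact h2.deriv

lemma pdy_eq {g : ℝ → ℝ → ℝ → ℝ} {G : E3 → ℝ} (hg : ∀ x y t, g x y t = G (x, y, t))
    (hG : Differentiable ℝ G) (x y t : ℝ) : pdy g x y t = D ee2 G (x, y, t) := by
  have h1 : HasDerivAt (fun s : ℝ => ((x, s, t) : E3)) ee2 y :=
    (hasDerivAt_const y x).prodMk ((hasDerivAt_id y).prodMk (hasDerivAt_const y t))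
  have h2 := (hG (x, y, t)).hasFDerivAt.comp_hasDerivAt y h1
  have h3 : (fun s => g x s t) = fun s => G (x, s, t) := funext fun s => hg x s t
  show deriv (fun s => g x s t) y = _
  rw [h3]
  exact h2.deriv

lemma pdt_eq {g : ℝ → ℝ → ℝ → ℝ} {G : E3 → ℝ} (hg : ∀ x y t, g x y t = G (x, y, t))
    (hG : Differentiable ℝ G) (x y t : ℝ) : pdt g x y t = D ee3 G (x, y, t) := by
  have h1 : HasDerivAt (fun s : ℝ => ((x, y, s) : E3)) ee3 t :=
    (hasDerivAt_const t x).prodMk ((hasDerivAt_const t y).prodMk (hasDerivAt_id t))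
  have h2 := (hG (x, y, t)).hasFDerivAt.comp_hasDerivAt t h1
  have h3 : (fun s => g x y s) = fun s => G (x, y, s) := funext fun s => hg x y s
  show deriv (fun s => g x y s) t = _
  rw [h3]
  exact h2.deriv

theorem main_aux (v : ℝ → ℝ → ℝ → ℝ) (V : E3 → ℝ) (hVv : ∀ x y t, v x y t = V (x, y, t))
    (hV : ContDiff ℝ (⊤:ℕ∞) V)
    (hpos : ∀ p, 0 < V p)
    (hlin : ∀ x y t, 2 * pdt v x y t = 3 * pdy (pdx v) x y t - pdx (pdx (pdx v)) x y t)
    (u q : ℝ → ℝ → ℝ → ℝ)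
    (hu : ∀ x y t, u x y t = pdx v x y t / (2 * v x y t))
    (hq : ∀ x y t, q x y t = pdy v x y t / (2 * v x y t)) :
    (∀ x y t, -2 * pdt u x y t = pdx (pdx (pdx u)) x y t
        + 6 * (u x y t * pdx (pdx u) x y t + pdx u x y t ^ 2
            + 2 * u x y t ^ 2 * pdx u x y t)
        - 3 * pdy (pdx u) x y t - 6 * u x y t * pdy u x y t
        - 6 * q x y t * pdx u x y t) ∧
    (∀ x y t, pdx q x y t = pdy u x y t) := by
  have hVd : Differentiable ℝ V := smooth_diff hV
  have hV1 : ContDiff ℝ (⊤:ℕ∞) (D ee1 V) := contDiff_D ee1 hV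
  have hV11 : ContDiff ℝ (⊤:ℕ∞) (D ee1 (D ee1 V)) := contDiff_D ee1 hV1
  have hVne : ∀ p, V p ≠ 0 := fun p => (hpos p).ne'
  have h2V : ∀ p, 2 * V p ≠ 0 := fun p => mul_ne_zero two_ne_zero (hVne p)
  have hU : ContDiff ℝ (⊤:ℕ∞) (UU V) := hV1.div (contDiff_const.mul hV) h2V
  have hQ : ContDiff ℝ (⊤:ℕ∞) (QQ V) :=
    (contDiff_D ee2 hV).div (contDiff_const.mul hV) h2V
  have hUd : Differentiable ℝ (UU V) := smooth_diff hU
  have hUx : ContDiff ℝ (⊤:ℕ∞) (D ee1 (UU V)) := contDiff_D ee1 hU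
  have hUxx : ContDiff ℝ (⊤:ℕ∞) (D ee1 (D ee1 (UU V))) := contDiff_D ee1 hUx
  -- conversions for v
  have hvx : ∀ x y t, pdx v x y t = D ee1 V (x, y, t) := pdx_eq hVv hVd
  have hvt : ∀ x y t, pdt v x y t = D ee3 V (x, y, t) := pdt_eq hVv hVd
  have hvxx : ∀ x y t, pdx (pdx v) x y t = D ee1 (D ee1 V) (x, y, t) :=
    pdx_eq hvx (smooth_diff hV1)
  have hvxy : ∀ x y t, pdy (pdx v) x y t = D ee2 (D ee1 V) (x, y, t) :=
    pdy_eq hvx (smooth_diff hV1)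
  have hvxxx : ∀ x y t, pdx (pdx (pdx v)) x y t = D ee1 (D ee1 (D ee1 V)) (x, y, t) :=
    pdx_eq hvxx (smooth_diff hV11)
  have hlinV : ∀ p, 2 * D ee3 V p = 3 * D ee2 (D ee1 V) p - D ee1 (D ee1 (D ee1 V)) p := by
    intro p
    obtain ⟨x, y, t⟩ := p
    rw [← hvt, ← hvxy, ← hvxxx]
    exact hlin x y t
  -- conversions for u, q
  have hu' : ∀ x y t, u x y t = UU V (x, y, t) := by
    intro x y t
    rw [hu, hvx x y t, hVv x y t]
    rfl
  have hq' : ∀ x y t, q x y t = QQ V (x, y, t) := by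
    intro x y t
    rw [hq, pdy_eq hVv hVd x y t, hVv x y t]
    rfl
  have hut : ∀ x y t, pdt u x y t = D ee3 (UU V) (x, y, t) := pdt_eq hu' hUd
  have hux : ∀ x y t, pdx u x y t = D ee1 (UU V) (x, y, t) := pdx_eq hu' hUd
  have huy : ∀ x y t, pdy u x y t = D ee2 (UU V) (x, y, t) := pdy_eq hu' hUd
  have huxx : ∀ x y t, pdx (pdx u) x y t = D ee1 (D ee1 (UU V)) (x, y, t) :=
    pdx_eq hux (smooth_diff hUx)
  have huxy : ∀ x y t, pdy (pdx u) x y t = D ee2 (D ee1 (UU V)) (x, y, t) :=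
    pdy_eq hux (smooth_diff hUx)
  have huxxx : ∀ x y t, pdx (pdx (pdx u)) x y t = D ee1 (D ee1 (D ee1 (UU V))) (x, y, t) :=
    pdx_eq huxx (smooth_diff hUxx)
  have hqx : ∀ x y t, pdx q x y t = D ee1 (QQ V) (x, y, t) := pdx_eq hq' (smooth_diff hQ)
  obtain ⟨H1, H2⟩ := abstract_main V hV hpos hlinV
  constructor
  · intro x y t
    rw [hut, hux, huy, huxx, huxy, huxxx, hu', hq']
    exact H1 (x, y, t)
  · intro x y t
    rw [hqx, huy]
    exact H2 (x, y, t)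

end ColeHopfAux

theorem Cole_Hopf_linearization_2d_Burgers
    (v : ℝ → ℝ → ℝ → ℝ)
    (hv : ContDiff ℝ (⊤ : ℕ∞) (fun p : ℝ × ℝ × ℝ => v p.1 p.2.1 p.2.2))
    (hpos : ∀ x y t, 0 < v x y t)
    (hlin : ∀ x y t, 2 * pdt v x y t = 3 * pdy (pdx v) x y t - pdx (pdx (pdx v)) x y t)
    (u q : ℝ → ℝ → ℝ → ℝ)
    (hu : ∀ x y t, u x y t = pdx v x y t / (2 * v x y t))
    (hq : ∀ x y t, q x y t = pdy v x y t / (2 * v x y t)) :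
    (∀ x y t, -2 * pdt u x y t = pdx (pdx (pdx u)) x y t
        + 6 * (u x y t * pdx (pdx u) x y t + pdx u x y t ^ 2
            + 2 * u x y t ^ 2 * pdx u x y t)
        - 3 * pdy (pdx u) x y t - 6 * u x y t * pdy u x y t
        - 6 * q x y t * pdx u x y t) ∧
    (∀ x y t, pdx q x y t = pdy u x y t) := by
  exact ColeHopfAux.main_aux v (fun p => v p.1 p.2.1 p.2.2) (fun x y t => rfl) hv
    (fun p => hpos p.1 p.2.1 p.2.2) hlin u q hu hq
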